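/- arXiv:1906.11482 — 3 statements merged into one kernel-verified Lean document; each statement's English description precedes it below -/
import Mathlib

section
/- Let H be a finite simple graph and v a non-isolated vertex of H. Then Tr(H,v) is well-covered if and only if H is well-covered. -/
open scoped Classical

/-- A finset of vertices is independent if no two of its members are adjacent. -/
def IsIndep {W : Type*} (G : SimpleGraph W) (s : Finset W) : Prop :=
  ∀ x ∈ s, ∀ y ∈ s, ¬ G.Adj x y

/-- A maximal independent set: independent and not properly contained in another
independent set. -/
def IsMaxIndep {W : Type*} (G : SimpleGraph W) (s : Finset W) : Prop :=
  IsIndep G s ∧ ∀ t : Finset W, IsIndep G t → s ⊆ t → t = s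

/-- The independence number `α(G)`: the maximum size of an independent set. -/
noncomputable def indepNum {W : Type*} (G : SimpleGraph W) [Fintype W] : ℕ :=
  sSup {n | ∃ s : Finset W, IsIndep G s ∧ s.card = n}

/-- Trung's construction `Tr(H, v)`: three new vertices `a = Sum.inr 0`, `b = Sum.inr 1`,
`c = Sum.inr 2` are added to `H`; `c` is joined to `b` and to every neighbor of `v`,
`b` is joined to `a`, and `a` is joined to `v`. -/
def Tr {V : Type*} (H : SimpleGraph V) (v : V) : SimpleGraph (V ⊕ Fin 3) :=
  SimpleGraph.fromRel (fun x y =>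
    match x, y with
    | Sum.inl x, Sum.inl y => H.Adj x y
    | Sum.inl x, Sum.inr i => (i = 0 ∧ x = v) ∨ (i = 2 ∧ H.Adj x v)
    | Sum.inr i, Sum.inr j => (i = 0 ∧ j = 1) ∨ (i = 1 ∧ j = 2)
    | _, _ => False)

/-- The set of vertices remaining after deleting the closed neighborhood `N[F]`
of a set `F` of vertices. -/
def offNbhd {V : Type*} (G : SimpleGraph V) (F : Set V) : Set V :=
  {w | w ∉ F ∧ ∀ u ∈ F, ¬ G.Adj u w}

/-- `G_F`: the induced subgraph of `G` on `V(G) \ N[F]`. -/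
def delNbhd {V : Type*} (G : SimpleGraph V) (F : Set V) : SimpleGraph (offNbhd G F) :=
  G.induce (offNbhd G F)

/-- `H_v = H \ N[v]`. -/
def delVert {V : Type*} (H : SimpleGraph V) (v : V) : SimpleGraph (offNbhd H {v}) :=
  delNbhd H {v}

/-- The independence polynomial `I(G, x) = Σ_i a_i x^i` of a finite graph,
as a polynomial over `ℚ`. -/
noncomputable def indepPoly {W : Type*} (G : SimpleGraph W) [Fintype W] : Polynomial ℚ :=
  ∑ s ∈ Finset.univ.filter (fun s : Finset W => IsIndep G s),
    (Polynomial.X : Polynomial ℚ) ^ s.card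

/-- `a_i(G)`: the number of independent sets of size `i`, indexed by `ℤ`
(so that it is `0` for `i < 0`). -/
noncomputable def numIndep {W : Type*} (G : SimpleGraph W) [Fintype W] (i : ℤ) : ℕ :=
  (Finset.univ.filter (fun s : Finset W => IsIndep G s ∧ (s.card : ℤ) = i)).card

/-- A finite graph is well-covered if every maximal independent set has size `α(G)`. -/
def WellCovered {W : Type*} (G : SimpleGraph W) [Fintype W] : Prop :=
  ∀ s : Finset W, IsMaxIndep G s → s.card = indepNum G

/-- A finite graph is a `W₂` graph if it has at least two vertices and every pair of
disjoint independent sets is contained in a pair of disjoint maximum independent sets. -/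
def IsW2 {W : Type*} (G : SimpleGraph W) [Fintype W] : Prop :=
  2 ≤ Fintype.card W ∧
    ∀ A B : Finset W, IsIndep G A → IsIndep G B → Disjoint A B →
      ∃ A' B' : Finset W, IsIndep G A' ∧ IsIndep G B' ∧ Disjoint A' B' ∧
        A ⊆ A' ∧ B ⊆ B' ∧ A'.card = indepNum G ∧ B'.card = indepNum G

/-! A maximal independent set `S` of `Tr H v` meets the path `a - b - c` in `{a}`, `{b}`, `{c}`
or `{a, c}`. In the first three cases its trace on `H` is a maximal independent set of `H`; in the
last, the trace together with `v` is one (`a ∈ S` keeps `v` out of `S`, and `c ∈ S` keeps the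
neighbours of `v` out). Conversely, every maximal independent set of `H` together with `b` is
maximal in `Tr H v`. Hence the sizes of the maximal independent sets of `Tr H v` are exactly those
of `H`, shifted by one. -/

section Independence

variable {W : Type*} {G : SimpleGraph W} {s : Finset W}

lemma IsIndep.insert (hs : IsIndep G s) {z : W} (hz : ∀ y ∈ s, ¬ G.Adj z y) :
    IsIndep G (insert z s) := by
  simp only [IsIndep, Finset.mem_insert, forall_eq_or_imp, G.irrefl, not_false_eq_true,
    true_and]
  exact ⟨hz, fun x hx => ⟨fun h => hz x hx h.symm, hs x hx⟩⟩

lemma isMaxIndep_iff_maximal : IsMaxIndep G s ↔ Maximal (IsIndep G) s :=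
  ⟨fun h => ⟨h.1, fun t ht hst => (h.2 t ht hst).le⟩,
    fun h => ⟨h.1, fun _ ht hst => h.eq_of_ge ht hst⟩⟩

lemma isMaxIndep_iff_dominating :
    IsMaxIndep G s ↔ IsIndep G s ∧ ∀ z ∉ s, ∃ y ∈ s, G.Adj z y := by
  refine ⟨fun h => ⟨h.1, fun z hz => ?_⟩, fun ⟨hs, hdom⟩ => ⟨hs, fun t ht hst => ?_⟩⟩
  · by_contra! hfree
    exact hz (h.2 _ (h.1.insert hfree) (Finset.subset_insert z s) ▸ Finset.mem_insert_self z s)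
  · refine (Finset.Subset.antisymm hst fun z hzt => ?_).symm
    by_contra hzs
    obtain ⟨y, hys, hzy⟩ := hdom z hzs
    exact ht z hzt y (hst hys) hzy

variable [Fintype W]

lemma IsIndep.card_le_indepNum (hs : IsIndep G s) : s.card ≤ indepNum G :=
  le_csSup ⟨Fintype.card W, by rintro n ⟨t, -, rfl⟩; exact t.card_le_univ⟩ ⟨s, hs, rfl⟩

lemma exists_isIndep_card_eq_indepNum : ∃ s : Finset W, IsIndep G s ∧ s.card = indepNum G :=
  Nat.sSup_mem (s := {n | ∃ s : Finset W, IsIndep G s ∧ s.card = n}) ⟨0, ∅, by simp [IsIndep]⟩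
    ⟨Fintype.card W, by rintro n ⟨t, -, rfl⟩; exact t.card_le_univ⟩

lemma IsIndep.exists_isMaxIndep_superset (hs : IsIndep G s) : ∃ t, IsMaxIndep G t ∧ s ⊆ t := by
  obtain ⟨t, hst, ht⟩ := Finite.exists_le_maximal hs
  exact ⟨t, isMaxIndep_iff_maximal.2 ht, hst⟩

lemma wellCovered_iff_forall_card_eq :
    WellCovered G ↔ ∀ s t, IsMaxIndep G s → IsMaxIndep G t → s.card = t.card := by
  refine ⟨fun h s t hs ht => (h s hs).trans (h t ht).symm, fun h s hs => ?_⟩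
  obtain ⟨m, hm, hmα⟩ := exists_isIndep_card_eq_indepNum (G := G)
  obtain ⟨t, ht, hmt⟩ := hm.exists_isMaxIndep_superset
  exact (h s t hs ht).trans
    (le_antisymm ht.1.card_le_indepNum (hmα ▸ Finset.card_le_card hmt))

lemma wellCovered_iff_of_card_add {W' : Type*} [Fintype W'] {G' : SimpleGraph W'} (k : ℕ)
    (hlift : ∀ s, IsMaxIndep G s → ∃ t, IsMaxIndep G' t ∧ t.card = s.card + k)
    (hproj : ∀ t, IsMaxIndep G' t → ∃ s, IsMaxIndep G s ∧ t.card = s.card + k) :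
    WellCovered G ↔ WellCovered G' := by
  simp only [wellCovered_iff_forall_card_eq]
  refine ⟨fun h t t' ht ht' => ?_, fun h s s' hs hs' => ?_⟩
  · obtain ⟨s, hs, hts⟩ := hproj t ht
    obtain ⟨s', hs', hts'⟩ := hproj t' ht'
    have := h s s' hs hs'
    omega
  · obtain ⟨t, ht, hts⟩ := hlift s hs
    obtain ⟨t', ht', hts'⟩ := hlift s' hs'
    have := h t t' ht ht'
    omega

end Independence

namespace Tr

open Finset Sum

variable {V : Type*} {H : SimpleGraph V} {v : V}

@[simp]
lemma adj_inl_inl {x y : V} : (Tr H v).Adj (inl x) (inl y) ↔ H.Adj x y := by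
  simp only [Tr, SimpleGraph.fromRel_adj, ne_eq, inl.injEq]
  exact ⟨fun ⟨_, h⟩ => h.elim id SimpleGraph.Adj.symm, fun h => ⟨h.ne, Or.inl h⟩⟩

@[simp]
lemma adj_inl_inr {x : V} {i : Fin 3} :
    (Tr H v).Adj (inl x) (inr i) ↔ i = 0 ∧ x = v ∨ i = 2 ∧ H.Adj x v := by
  simp [Tr]

lemma adj_inr_zero_iff {z : V ⊕ Fin 3} : (Tr H v).Adj (inr 0) z ↔ z = inl v ∨ z = inr 1 := by
  rcases z with x | i
  · simp [Tr, eq_comm]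
  · fin_cases i <;> simp [Tr]

lemma adj_inr_one_iff {z : V ⊕ Fin 3} : (Tr H v).Adj (inr 1) z ↔ z = inr 0 ∨ z = inr 2 := by
  rcases z with x | i
  · simp [Tr]
  · fin_cases i <;> simp [Tr]

lemma adj_inr_two_iff {z : V ⊕ Fin 3} :
    (Tr H v).Adj (inr 2) z ↔ z = inr 1 ∨ ∃ x, H.Adj x v ∧ z = inl x := by
  rcases z with x | i
  · simp [Tr]
  · fin_cases i <;> simp [Tr]

lemma isMaxIndep_disjSum_singleton_one {T : Finset V} (hT : IsMaxIndep H T) :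
    IsMaxIndep (Tr H v) (T.disjSum {1}) := by
  obtain ⟨hind, hdom⟩ := isMaxIndep_iff_dominating.1 hT
  refine isMaxIndep_iff_dominating.2 ⟨?_, ?_⟩
  · rintro (x | i) hx (y | j) hy
    · exact fun h => hind x (inl_mem_disjSum.1 hx) y (inl_mem_disjSum.1 hy) (adj_inl_inl.1 h)
    · rw [mem_singleton.1 (inr_mem_disjSum.1 hy), ← SimpleGraph.adj_comm, adj_inr_one_iff]
      simp
    · rw [mem_singleton.1 (inr_mem_disjSum.1 hx), adj_inr_one_iff]
      simp
    · rw [mem_singleton.1 (inr_mem_disjSum.1 hx), mem_singleton.1 (inr_mem_disjSum.1 hy)]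
      exact (Tr H v).irrefl
  · rintro (w | i) hw
    · obtain ⟨u, hu, hwu⟩ := hdom w (mt inl_mem_disjSum.2 hw)
      exact ⟨inl u, inl_mem_disjSum.2 hu, adj_inl_inl.2 hwu⟩
    · refine ⟨inr 1, inr_mem_disjSum.2 (mem_singleton_self 1), ?_⟩
      rw [SimpleGraph.adj_comm, adj_inr_one_iff]
      fin_cases i <;> simp_all

section MaxIndep

variable {S : Finset (V ⊕ Fin 3)}

lemma inr_zero_mem_or_inr_two_mem (hS : IsMaxIndep (Tr H v) S) (hb : inr 1 ∉ S) :
    inr 0 ∈ S ∨ inr 2 ∈ S := by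
  obtain ⟨y, hy, hby⟩ := (isMaxIndep_iff_dominating.1 hS).2 _ hb
  rcases adj_inr_one_iff.1 hby with rfl | rfl
  exacts [Or.inl hy, Or.inr hy]

lemma inl_mem_of_inr_zero_notMem (hS : IsMaxIndep (Tr H v) S) (ha : inr 0 ∉ S)
    (hb : inr 1 ∉ S) : inl v ∈ S := by
  obtain ⟨y, hy, hay⟩ := (isMaxIndep_iff_dominating.1 hS).2 _ ha
  rcases adj_inr_zero_iff.1 hay with rfl | rfl
  exacts [hy, absurd hy hb]

lemma exists_adj_inl_mem_of_inr_two_notMem (hS : IsMaxIndep (Tr H v) S) (hc : inr 2 ∉ S)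
    (hb : inr 1 ∉ S) : ∃ x, H.Adj x v ∧ inl x ∈ S := by
  obtain ⟨y, hy, hcy⟩ := (isMaxIndep_iff_dominating.1 hS).2 _ hc
  rcases adj_inr_two_iff.1 hcy with rfl | ⟨x, hxv, rfl⟩
  exacts [absurd hy hb, ⟨x, hxv, hy⟩]

lemma isIndep_toLeft (hS : IsMaxIndep (Tr H v) S) : IsIndep H S.toLeft := fun _ hx _ hy h =>
  hS.1 _ (mem_toLeft.1 hx) _ (mem_toLeft.1 hy) (adj_inl_inl.2 h)

lemma inr_one_notMem_of_inr_zero_mem (hS : IsMaxIndep (Tr H v) S) (ha : inr 0 ∈ S) :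
    inr 1 ∉ S := fun hb =>
  hS.1 _ ha _ hb (adj_inr_zero_iff.2 (Or.inr rfl))

lemma inr_one_notMem_of_inr_two_mem (hS : IsMaxIndep (Tr H v) S) (hc : inr 2 ∈ S) :
    inr 1 ∉ S := fun hb =>
  hS.1 _ hc _ hb (adj_inr_two_iff.2 (Or.inl rfl))

lemma isMaxIndep_toLeft (hS : IsMaxIndep (Tr H v) S) (hac : ¬(inr 0 ∈ S ∧ inr 2 ∈ S)) :
    IsMaxIndep H S.toLeft := by
  refine isMaxIndep_iff_dominating.2 ⟨isIndep_toLeft hS, fun w hw => ?_⟩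
  obtain ⟨y, hy, hwy⟩ := (isMaxIndep_iff_dominating.1 hS).2 (inl w) (mt mem_toLeft.2 hw)
  rcases y with u | i
  · exact ⟨u, mem_toLeft.2 hy, adj_inl_inl.1 hwy⟩
  rcases adj_inl_inr.1 hwy with ⟨rfl, rfl⟩ | ⟨rfl, hwv⟩
  · obtain ⟨x, hxv, hx⟩ := exists_adj_inl_mem_of_inr_two_notMem hS (fun hc => hac ⟨hy, hc⟩)
      (inr_one_notMem_of_inr_zero_mem hS hy)
    exact ⟨x, mem_toLeft.2 hx, hxv.symm⟩
  · exact ⟨v, mem_toLeft.2 (inl_mem_of_inr_zero_notMem hS (fun ha => hac ⟨ha, hy⟩)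
      (inr_one_notMem_of_inr_two_mem hS hy)), hwv⟩

lemma isMaxIndep_insert_toLeft (hS : IsMaxIndep (Tr H v) S) (hc : inr 2 ∈ S) :
    IsMaxIndep H (insert v S.toLeft) := by
  have hvT : ∀ x ∈ S.toLeft, ¬ H.Adj v x := fun x hx hvx =>
    hS.1 _ (mem_toLeft.1 hx) _ hc (adj_inl_inr.2 (Or.inr ⟨rfl, hvx.symm⟩))
  refine isMaxIndep_iff_dominating.2 ⟨(isIndep_toLeft hS).insert hvT, fun w hw => ?_⟩
  obtain ⟨hwv, hw⟩ := not_or.1 (mem_insert.not.1 hw)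
  obtain ⟨y, hy, hwy⟩ := (isMaxIndep_iff_dominating.1 hS).2 (inl w) (mt mem_toLeft.2 hw)
  rcases y with u | i
  · exact ⟨u, mem_insert_of_mem (mem_toLeft.2 hy), adj_inl_inl.1 hwy⟩
  rcases adj_inl_inr.1 hwy with ⟨-, rfl⟩ | ⟨-, hwv'⟩
  exacts [absurd rfl hwv, ⟨v, mem_insert_self v _, hwv'⟩]

lemma card_toRight_eq_one (hS : IsMaxIndep (Tr H v) S) (hac : ¬(inr 0 ∈ S ∧ inr 2 ∈ S)) :
    S.toRight.card = 1 := by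
  refine le_antisymm (card_le_one.2 fun i hi j hj => ?_) (card_pos.2 ?_)
  · rw [mem_toRight] at hi hj
    have := hS.1 _ hi _ hj
    fin_cases i <;> fin_cases j <;> simp_all [Tr]
  · by_cases hb : inr 1 ∈ S
    · exact ⟨1, mem_toRight.2 hb⟩
    · rcases inr_zero_mem_or_inr_two_mem hS hb with h | h
      exacts [⟨0, mem_toRight.2 h⟩, ⟨2, mem_toRight.2 h⟩]

lemma exists_isMaxIndep_card_add_one (hS : IsMaxIndep (Tr H v) S) :
    ∃ T, IsMaxIndep H T ∧ S.card = T.card + 1 := by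
  rw [← card_toLeft_add_card_toRight]
  by_cases hac : inr 0 ∈ S ∧ inr 2 ∈ S
  · obtain ⟨ha, hc⟩ := hac
    have hv : v ∉ S.toLeft := fun hv =>
      hS.1 _ (mem_toLeft.1 hv) _ ha (adj_inl_inr.2 (Or.inl ⟨rfl, rfl⟩))
    have hR : S.toRight = {0, 2} := by
      have hb := inr_one_notMem_of_inr_zero_mem hS ha
      ext i
      fin_cases i <;> simp [ha, hb, hc]
    refine ⟨_, isMaxIndep_insert_toLeft hS hc, ?_⟩
    rw [card_insert_of_notMem hv, hR]
    rfl
  · exact ⟨_, isMaxIndep_toLeft hS hac, by rw [card_toRight_eq_one hS hac]⟩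

end MaxIndep

end Tr

theorem wellCovered_Tr_iff_general {V : Type*} [Fintype V] (H : SimpleGraph V) (v : V) :
    WellCovered (Tr H v) ↔ WellCovered H := by
  refine (wellCovered_iff_of_card_add 1 (fun T hT => ?_) fun S hS => ?_).symm
  · exact ⟨_, Tr.isMaxIndep_disjSum_singleton_one hT, Finset.card_disjSum _ _⟩
  · exact Tr.exists_isMaxIndep_card_add_one hS

theorem wellCovered_Tr_iff {V : Type*} [Fintype V] (H : SimpleGraph V) (v : V)
    (hv : ∃ u, H.Adj v u) :
    WellCovered (Tr H v) ↔ WellCovered H :=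
  wellCovered_Tr_iff_general H v
end

section
/- Let H be a finite simple graph, v a non-isolated vertex of H, and G = Tr(H,v) with new vertices a, b, c. The maximal independent sets of G are exactly the sets of the form A ∪ {a}, A ∪ {b}, B ∪ {c}, B ∪ {b}, or (B ∪ {a,c}) \ {v}, where A and B range over maximal independent sets of H with v ∉ A and v ∈ B. -/
open scoped Classical

section TrHelpers

variable {V : Type*} {H : SimpleGraph V} {v : V}

lemma tr_inl_inl {x y : V} : (Tr H v).Adj (Sum.inl x) (Sum.inl y) ↔ H.Adj x y := by
  constructor
  · rintro ⟨hne, h | h⟩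
    · exact h
    · exact h.symm
  · intro h
    exact ⟨by simpa using h.ne, Or.inl h⟩

lemma tr_inl_a {x : V} : (Tr H v).Adj (Sum.inl x) (Sum.inr 0) ↔ x = v := by
  constructor
  · rintro ⟨hne, h | h⟩ <;> simp_all
  · rintro rfl
    exact ⟨by simp, Or.inl (Or.inl ⟨rfl, rfl⟩)⟩

lemma tr_inl_b {x : V} : ¬ (Tr H v).Adj (Sum.inl x) (Sum.inr 1) := by
  rintro ⟨hne, h | h⟩ <;> simp_all

lemma tr_inl_c {x : V} : (Tr H v).Adj (Sum.inl x) (Sum.inr 2) ↔ H.Adj x v := by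
  constructor
  · rintro ⟨hne, h | h⟩ <;> simp_all
  · intro h
    exact ⟨by simp, Or.inl (Or.inr ⟨rfl, h⟩)⟩

lemma tr_a_b : (Tr H v).Adj (Sum.inr 0) (Sum.inr 1) := ⟨by simp, Or.inl (Or.inl ⟨rfl, rfl⟩)⟩
lemma tr_b_c : (Tr H v).Adj (Sum.inr 1) (Sum.inr 2) := ⟨by simp, Or.inl (Or.inr ⟨rfl, rfl⟩)⟩
lemma tr_a_c : ¬ (Tr H v).Adj (Sum.inr 0) (Sum.inr 2) := by
  rintro ⟨hne, h | h⟩ <;> simp_all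

end TrHelpers

lemma isMaxIndep_iff' {W : Type*} (G : SimpleGraph W) (s : Finset W) :
    IsMaxIndep G s ↔ IsIndep G s ∧ ∀ x ∉ s, ∃ y ∈ s, G.Adj x y := by
  constructor
  · rintro ⟨hi, hmax⟩
    refine ⟨hi, fun x hx => ?_⟩
    by_contra h
    push_neg at h
    have hind : IsIndep G (insert x s) := by
      intro p hp q hq
      intro hadj
      rcases Finset.mem_insert.1 hp with hp' | hp' <;> rcases Finset.mem_insert.1 hq with hq' | hq'
      · subst hp'; subst hq'; exact hadj.ne rfl
      · subst hp'; exact h q hq' hadj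
      · subst hq'; exact h p hp' hadj.symm
      · exact hi p hp' q hq' hadj
    have heq := hmax _ hind (Finset.subset_insert _ _)
    exact hx (heq ▸ Finset.mem_insert_self x s)
  · rintro ⟨hi, hdom⟩
    refine ⟨hi, fun t ht hsub => ?_⟩
    apply Finset.Subset.antisymm _ hsub
    intro z hz
    by_contra hzs
    obtain ⟨y, hy, hadj⟩ := hdom z hzs
    exact ht z hz y (hsub hy) hadj

section TrMaxCases

variable {V : Type*} [DecidableEq V] {H : SimpleGraph V} {v : V}

lemma maxIndep_case_a {A : Finset V} (hAmax : IsMaxIndep H A) (hvA : v ∉ A) :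
    IsMaxIndep (Tr H v) (insert (Sum.inr 0) (A.map ⟨Sum.inl, Sum.inl_injective⟩)) := by
  obtain ⟨hAind, hAdom⟩ := (isMaxIndep_iff' H A).1 hAmax
  rw [isMaxIndep_iff']
  constructor
  · intro x hx y hy hadj
    simp only [Finset.mem_insert, Finset.mem_map, Function.Embedding.coeFn_mk] at hx hy
    rcases hx with rfl | ⟨u, hu, rfl⟩ <;> rcases hy with rfl | ⟨w, hw, rfl⟩
    · exact hadj.ne rfl
    · exact hvA ((tr_inl_a.1 hadj.symm) ▸ hw)
    · exact hvA ((tr_inl_a.1 hadj) ▸ hu)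
    · exact hAind u hu w hw (tr_inl_inl.1 hadj)
  · intro x hx
    obtain ⟨w, hwA, hvw⟩ := hAdom v hvA
    rcases x with u | i
    · have huA : u ∉ A := fun h =>
        hx (Finset.mem_insert_of_mem (Finset.mem_map_of_mem _ h))
      by_cases huv : u = v
      · exact ⟨Sum.inr 0, Finset.mem_insert_self _ _, tr_inl_a.2 huv⟩
      · obtain ⟨w', hw', hadj⟩ := hAdom u huA
        exact ⟨Sum.inl w', Finset.mem_insert_of_mem (Finset.mem_map_of_mem _ hw'),
          tr_inl_inl.2 hadj⟩
    · fin_cases i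
      · exact absurd (Finset.mem_insert_self _ _) hx
      · exact ⟨Sum.inr 0, Finset.mem_insert_self _ _, tr_a_b.symm⟩
      · exact ⟨Sum.inl w, Finset.mem_insert_of_mem (Finset.mem_map_of_mem _ hwA),
          (tr_inl_c.2 hvw.symm).symm⟩

lemma maxIndep_case_b {A : Finset V} (hAmax : IsMaxIndep H A) :
    IsMaxIndep (Tr H v) (insert (Sum.inr 1) (A.map ⟨Sum.inl, Sum.inl_injective⟩)) := by
  obtain ⟨hAind, hAdom⟩ := (isMaxIndep_iff' H A).1 hAmax
  rw [isMaxIndep_iff']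
  constructor
  · intro x hx y hy hadj
    simp only [Finset.mem_insert, Finset.mem_map, Function.Embedding.coeFn_mk] at hx hy
    rcases hx with rfl | ⟨u, hu, rfl⟩ <;> rcases hy with rfl | ⟨w, hw, rfl⟩
    · exact hadj.ne rfl
    · exact tr_inl_b hadj.symm
    · exact tr_inl_b hadj
    · exact hAind u hu w hw (tr_inl_inl.1 hadj)
  · intro x hx
    rcases x with u | i
    · have huA : u ∉ A := fun h =>
        hx (Finset.mem_insert_of_mem (Finset.mem_map_of_mem _ h))
      obtain ⟨w', hw', hadj⟩ := hAdom u huA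
      exact ⟨Sum.inl w', Finset.mem_insert_of_mem (Finset.mem_map_of_mem _ hw'),
        tr_inl_inl.2 hadj⟩
    · fin_cases i
      · exact ⟨Sum.inr 1, Finset.mem_insert_self _ _, tr_a_b⟩
      · exact absurd (Finset.mem_insert_self _ _) hx
      · exact ⟨Sum.inr 1, Finset.mem_insert_self _ _, tr_b_c.symm⟩

lemma maxIndep_case_c {B : Finset V} (hBmax : IsMaxIndep H B) (hvB : v ∈ B) :
    IsMaxIndep (Tr H v) (insert (Sum.inr 2) (B.map ⟨Sum.inl, Sum.inl_injective⟩)) := by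
  obtain ⟨hBind, hBdom⟩ := (isMaxIndep_iff' H B).1 hBmax
  rw [isMaxIndep_iff']
  constructor
  · intro x hx y hy hadj
    simp only [Finset.mem_insert, Finset.mem_map, Function.Embedding.coeFn_mk] at hx hy
    rcases hx with rfl | ⟨u, hu, rfl⟩ <;> rcases hy with rfl | ⟨w, hw, rfl⟩
    · exact hadj.ne rfl
    · exact hBind w hw v hvB (tr_inl_c.1 hadj.symm)
    · exact hBind u hu v hvB (tr_inl_c.1 hadj)
    · exact hBind u hu w hw (tr_inl_inl.1 hadj)
  · intro x hx
    rcases x with u | i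
    · have huB : u ∉ B := fun h =>
        hx (Finset.mem_insert_of_mem (Finset.mem_map_of_mem _ h))
      obtain ⟨w', hw', hadj⟩ := hBdom u huB
      exact ⟨Sum.inl w', Finset.mem_insert_of_mem (Finset.mem_map_of_mem _ hw'),
        tr_inl_inl.2 hadj⟩
    · fin_cases i
      · exact ⟨Sum.inl v, Finset.mem_insert_of_mem (Finset.mem_map_of_mem _ hvB),
          (tr_inl_a.2 rfl).symm⟩
      · exact ⟨Sum.inr 2, Finset.mem_insert_self _ _, tr_b_c⟩
      · exact absurd (Finset.mem_insert_self _ _) hx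

lemma maxIndep_case_ac {B : Finset V} (hBmax : IsMaxIndep H B) (hvB : v ∈ B) :
    IsMaxIndep (Tr H v) ((insert (Sum.inr 0) (insert (Sum.inr 2)
      (B.map ⟨Sum.inl, Sum.inl_injective⟩))).erase (Sum.inl v)) := by
  obtain ⟨hBind, hBdom⟩ := (isMaxIndep_iff' H B).1 hBmax
  have ha_mem : (Sum.inr 0 : V ⊕ Fin 3) ∈ (insert (Sum.inr 0) (insert (Sum.inr 2)
      (B.map ⟨Sum.inl, Sum.inl_injective⟩))).erase (Sum.inl v) :=
    Finset.mem_erase.2 ⟨by simp, Finset.mem_insert_self _ _⟩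
  have hc_mem : (Sum.inr 2 : V ⊕ Fin 3) ∈ (insert (Sum.inr 0) (insert (Sum.inr 2)
      (B.map ⟨Sum.inl, Sum.inl_injective⟩))).erase (Sum.inl v) :=
    Finset.mem_erase.2 ⟨by simp, Finset.mem_insert_of_mem (Finset.mem_insert_self _ _)⟩
  have hl_mem : ∀ w ∈ B, w ≠ v → (Sum.inl w : V ⊕ Fin 3) ∈ (insert (Sum.inr 0)
      (insert (Sum.inr 2) (B.map ⟨Sum.inl, Sum.inl_injective⟩))).erase (Sum.inl v) :=
    fun w hw hwv => Finset.mem_erase.2 ⟨by simpa using hwv,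
      Finset.mem_insert_of_mem (Finset.mem_insert_of_mem (Finset.mem_map_of_mem _ hw))⟩
  rw [isMaxIndep_iff']
  constructor
  · intro x hx y hy hadj
    simp only [Finset.mem_erase, Finset.mem_insert, Finset.mem_map,
      Function.Embedding.coeFn_mk] at hx hy
    obtain ⟨hxne, hx⟩ := hx
    obtain ⟨hyne, hy⟩ := hy
    rcases hx with rfl | rfl | ⟨u, hu, rfl⟩ <;> rcases hy with rfl | rfl | ⟨w, hw, rfl⟩
    · exact hadj.ne rfl
    · exact tr_a_c hadj
    · exact hyne (by rw [tr_inl_a.1 hadj.symm])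
    · exact tr_a_c hadj.symm
    · exact hadj.ne rfl
    · exact hBind w hw v hvB (tr_inl_c.1 hadj.symm)
    · exact hxne (by rw [tr_inl_a.1 hadj])
    · exact hBind u hu v hvB (tr_inl_c.1 hadj)
    · exact hBind u hu w hw (tr_inl_inl.1 hadj)
  · intro x hx
    rcases x with u | i
    · by_cases huv : u = v
      · exact ⟨Sum.inr 0, ha_mem, tr_inl_a.2 huv⟩
      · have huB : u ∉ B := fun h => hx (hl_mem u h huv)
        obtain ⟨w, hw, hadj⟩ := hBdom u huB
        by_cases hwv : w = v
        · exact ⟨Sum.inr 2, hc_mem, tr_inl_c.2 (hwv ▸ hadj)⟩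
        · exact ⟨Sum.inl w, hl_mem w hw hwv, tr_inl_inl.2 hadj⟩
    · fin_cases i
      · exact absurd ha_mem hx
      · exact ⟨Sum.inr 0, ha_mem, tr_a_b.symm⟩
      · exact absurd hc_mem hx

end TrMaxCases

theorem maxIndep_Tr_characterization {V : Type*} [Fintype V] [DecidableEq V]
    (H : SimpleGraph V) (v : V) (hv : ∃ u, H.Adj v u) (F : Finset (V ⊕ Fin 3)) :
    IsMaxIndep (Tr H v) F ↔
      ((∃ A : Finset V, IsMaxIndep H A ∧ v ∉ A ∧
          (F = insert (Sum.inr 0) (A.map ⟨Sum.inl, Sum.inl_injective⟩) ∨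
           F = insert (Sum.inr 1) (A.map ⟨Sum.inl, Sum.inl_injective⟩))) ∨
       (∃ B : Finset V, IsMaxIndep H B ∧ v ∈ B ∧
          (F = insert (Sum.inr 2) (B.map ⟨Sum.inl, Sum.inl_injective⟩) ∨
           F = insert (Sum.inr 1) (B.map ⟨Sum.inl, Sum.inl_injective⟩) ∨
           F = (insert (Sum.inr 0) (insert (Sum.inr 2)
                  (B.map ⟨Sum.inl, Sum.inl_injective⟩))).erase (Sum.inl v)))) := by
  constructor
  · intro hF
    obtain ⟨hi, hdom⟩ := (isMaxIndep_iff' _ _).1 hF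
    set A : Finset V := Finset.univ.filter (fun x => Sum.inl x ∈ F) with hAdef
    have hA_mem : ∀ x : V, x ∈ A ↔ Sum.inl x ∈ F := by
      intro x; simp [hAdef]
    have hAind : IsIndep H A := fun x hx y hy hadj =>
      hi _ ((hA_mem x).1 hx) _ ((hA_mem y).1 hy) (tr_inl_inl.2 hadj)
    by_cases hb : Sum.inr 1 ∈ F
    · have ha : Sum.inr 0 ∉ F := fun h => hi _ h _ hb tr_a_b
      have hc : Sum.inr 2 ∉ F := fun h => hi _ hb _ h tr_b_c
      have hAmax : IsMaxIndep H A := by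
        rw [isMaxIndep_iff']
        refine ⟨hAind, fun u hu => ?_⟩
        obtain ⟨y, hy, hadj⟩ := hdom (Sum.inl u) (fun h => hu ((hA_mem u).2 h))
        rcases y with w | i
        · exact ⟨w, (hA_mem w).2 hy, tr_inl_inl.1 hadj⟩
        · fin_cases i
          · exact absurd hy ha
          · exact absurd hadj tr_inl_b
          · exact absurd hy hc
      have hFeq : F = insert (Sum.inr 1) (A.map ⟨Sum.inl, Sum.inl_injective⟩) := by
        ext x
        rcases x with u | i
        · simp only [Finset.mem_insert, Finset.mem_map, Function.Embedding.coeFn_mk,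
            Sum.inl.injEq]
          constructor
          · intro h; exact Or.inr ⟨u, (hA_mem u).2 h, rfl⟩
          · rintro (h | ⟨w, hw, rfl⟩)
            · exact absurd h (by simp)
            · exact (hA_mem w).1 hw
        · fin_cases i
          · simp [ha]
          · simp [hb]
          · simp [hc]
      by_cases hvA : v ∈ A
      · exact Or.inr ⟨A, hAmax, hvA, Or.inr (Or.inl hFeq)⟩
      · exact Or.inl ⟨A, hAmax, hvA, Or.inr hFeq⟩
    · have habc : Sum.inr 0 ∈ F ∨ Sum.inr 2 ∈ F := by
        obtain ⟨y, hy, hadj⟩ := hdom _ hb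
        rcases y with w | i
        · exact absurd hadj.symm tr_inl_b
        · fin_cases i
          · exact Or.inl hy
          · exact absurd rfl hadj.ne
          · exact Or.inr hy
      by_cases ha : Sum.inr 0 ∈ F
      · have hvA : v ∉ A := fun h => hi _ ((hA_mem v).1 h) _ ha (tr_inl_a.2 rfl)
        by_cases hc : Sum.inr 2 ∈ F
        · -- a, c ∈ F
          have hnoNbr : ∀ w ∈ A, ¬ H.Adj w v := fun w hw hadj =>
            hi _ ((hA_mem w).1 hw) _ hc (tr_inl_c.2 hadj)
          have hBind : IsIndep H (insert v A) := by
            intro x hx y hy hadj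
            rcases Finset.mem_insert.1 hx with hx' | hx' <;>
              rcases Finset.mem_insert.1 hy with hy' | hy'
            · subst hx'; subst hy'; exact hadj.ne rfl
            · subst hx'; exact hnoNbr y hy' hadj.symm
            · subst hy'; exact hnoNbr x hx' hadj
            · exact hAind x hx' y hy' hadj
          have hBmax : IsMaxIndep H (insert v A) := by
            rw [isMaxIndep_iff']
            refine ⟨hBind, fun u hu => ?_⟩
            have huv : u ≠ v := fun h => hu (h ▸ Finset.mem_insert_self v A)
            obtain ⟨y, hy, hadj⟩ := hdom (Sum.inl u)
              (fun h => hu (Finset.mem_insert_of_mem ((hA_mem u).2 h)))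
            rcases y with w | i
            · exact ⟨w, Finset.mem_insert_of_mem ((hA_mem w).2 hy), tr_inl_inl.1 hadj⟩
            · fin_cases i
              · exact absurd (tr_inl_a.1 hadj) huv
              · exact absurd hadj tr_inl_b
              · exact ⟨v, Finset.mem_insert_self v A, tr_inl_c.1 hadj⟩
          have hFeq : F = (insert (Sum.inr 0) (insert (Sum.inr 2)
              ((insert v A).map ⟨Sum.inl, Sum.inl_injective⟩))).erase (Sum.inl v) := by
            ext x
            rcases x with u | i
            · simp only [Finset.mem_erase, Finset.mem_insert, Finset.mem_map,
                Function.Embedding.coeFn_mk, Sum.inl.injEq]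
              constructor
              · intro h
                have huA : u ∈ A := (hA_mem u).2 h
                have huv : u ≠ v := fun e => hvA (e ▸ huA)
                exact ⟨by simpa using huv,
                  Or.inr (Or.inr ⟨u, Or.inr huA, rfl⟩)⟩
              · rintro ⟨hne, h | h | ⟨w, hw, rfl⟩⟩
                · exact absurd h (by simp)
                · exact absurd h (by simp)
                · rcases hw with h' | h'
                  · exact absurd (by simpa using h') hne
                  · exact (hA_mem w).1 h'
            · fin_cases i
              · simp [ha]
              · simp [hb]
              · simp [hc]
          exact Or.inr ⟨insert v A, hBmax, Finset.mem_insert_self v A,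
            Or.inr (Or.inr hFeq)⟩
        · -- a ∈ F, c ∉ F
          obtain ⟨y, hy, hadj⟩ := hdom _ hc
          have hwex : ∃ w ∈ A, H.Adj w v := by
            rcases y with w | i
            · exact ⟨w, (hA_mem w).2 hy, tr_inl_c.1 hadj.symm⟩
            · fin_cases i
              · exact absurd hadj.symm tr_a_c
              · exact absurd hy hb
              · exact absurd rfl hadj.ne
          obtain ⟨w, hwA, hwv⟩ := hwex
          have hAmax : IsMaxIndep H A := by
            rw [isMaxIndep_iff']
            refine ⟨hAind, fun u hu => ?_⟩
            by_cases huv : u = v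
            · exact ⟨w, hwA, huv ▸ hwv.symm⟩
            · obtain ⟨y', hy', hadj'⟩ := hdom (Sum.inl u) (fun h => hu ((hA_mem u).2 h))
              rcases y' with w' | i
              · exact ⟨w', (hA_mem w').2 hy', tr_inl_inl.1 hadj'⟩
              · fin_cases i
                · exact absurd (tr_inl_a.1 hadj') huv
                · exact absurd hy' hb
                · exact absurd hy' hc
          have hFeq : F = insert (Sum.inr 0) (A.map ⟨Sum.inl, Sum.inl_injective⟩) := by
            ext x
            rcases x with u | i
            · simp only [Finset.mem_insert, Finset.mem_map, Function.Embedding.coeFn_mk,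
                Sum.inl.injEq]
              constructor
              · intro h; exact Or.inr ⟨u, (hA_mem u).2 h, rfl⟩
              · rintro (h | ⟨w', hw', rfl⟩)
                · exact absurd h (by simp)
                · exact (hA_mem w').1 hw'
            · fin_cases i
              · simp [ha]
              · simp [hb]
              · simp [hc]
          exact Or.inl ⟨A, hAmax, hvA, Or.inl hFeq⟩
      · -- a ∉ F, hence c ∈ F
        have hc : Sum.inr 2 ∈ F := habc.resolve_left ha
        have hvA : v ∈ A := by
          obtain ⟨y, hy, hadj⟩ := hdom _ ha
          rcases y with u | i
          · have : u = v := tr_inl_a.1 hadj.symm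
            exact (hA_mem v).2 (this ▸ hy)
          · fin_cases i
            · exact absurd rfl hadj.ne
            · exact absurd hy hb
            · exact absurd hadj tr_a_c
        have hAmax : IsMaxIndep H A := by
          rw [isMaxIndep_iff']
          refine ⟨hAind, fun u hu => ?_⟩
          obtain ⟨y, hy, hadj⟩ := hdom (Sum.inl u) (fun h => hu ((hA_mem u).2 h))
          rcases y with w | i
          · exact ⟨w, (hA_mem w).2 hy, tr_inl_inl.1 hadj⟩
          · fin_cases i
            · exact absurd hy ha
            · exact absurd hy hb
            · exact ⟨v, hvA, tr_inl_c.1 hadj⟩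
        have hFeq : F = insert (Sum.inr 2) (A.map ⟨Sum.inl, Sum.inl_injective⟩) := by
          ext x
          rcases x with u | i
          · simp only [Finset.mem_insert, Finset.mem_map, Function.Embedding.coeFn_mk,
              Sum.inl.injEq]
            constructor
            · intro h; exact Or.inr ⟨u, (hA_mem u).2 h, rfl⟩
            · rintro (h | ⟨w', hw', rfl⟩)
              · exact absurd h (by simp)
              · exact (hA_mem w').1 hw'
          · fin_cases i
            · simp [ha]
            · simp [hb]
            · simp [hc]
        exact Or.inr ⟨A, hAmax, hvA, Or.inl hFeq⟩
  · rintro (⟨A, hAmax, hvA, (rfl | rfl)⟩ | ⟨B, hBmax, hvB, (rfl | rfl | rfl)⟩)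
    · exact maxIndep_case_a hAmax hvA
    · exact maxIndep_case_b hAmax
    · exact maxIndep_case_c hBmax hvB
    · exact maxIndep_case_b hBmax
    · exact maxIndep_case_ac hBmax hvB
end

section
/- Let H be a finite simple graph and v a non-isolated vertex of H. Then Tr(H,v) is a W₂ graph if and only if H is a W₂ graph. -/
open scoped Classical

open Sum Finset


section Basic
variable {W : Type*} [Fintype W] {G : SimpleGraph W}

lemma indep_card_le {s : Finset W} (hs : IsIndep G s) : s.card ≤ indepNum G :=
  le_csSup ⟨Fintype.card W, fun n ⟨t, _, ht⟩ => ht ▸ (t.card_le_univ.trans_eq (Finset.card_univ))⟩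
    ⟨s, hs, rfl⟩

lemma exists_max_indep (G : SimpleGraph W) :
    ∃ s : Finset W, IsIndep G s ∧ s.card = indepNum G := by
  have h1 : ({n | ∃ s : Finset W, IsIndep G s ∧ s.card = n}).Nonempty :=
    ⟨0, ∅, fun x hx => absurd hx (Finset.notMem_empty x), rfl⟩
  have h2 : BddAbove {n | ∃ s : Finset W, IsIndep G s ∧ s.card = n} :=
    ⟨Fintype.card W, fun n ⟨t, _, ht⟩ => ht ▸ (t.card_le_univ.trans_eq (Finset.card_univ))⟩
  exact Nat.sSup_mem h1 h2

end Basic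

section Adj
variable {V : Type*} {H : SimpleGraph V} {v : V}

lemma tr_adj_inl_inl {x y : V} : (Tr H v).Adj (inl x) (inl y) ↔ H.Adj x y := by
  constructor
  · rintro ⟨hne, h | h⟩
    exacts [h, h.symm]
  · intro h
    exact ⟨by simp [h.ne], Or.inl h⟩

lemma tr_adj_inl_inr {x : V} {i : Fin 3} :
    (Tr H v).Adj (inl x) (inr i) ↔ (i = 0 ∧ x = v) ∨ (i = 2 ∧ H.Adj x v) := by
  constructor
  · rintro ⟨hne, h | h⟩
    exacts [h, h.elim]
  · intro h
    exact ⟨by simp, Or.inl h⟩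

lemma tr_adj_inr_inr {i j : Fin 3} :
    (Tr H v).Adj (inr i) (inr j) ↔
      (i = 0 ∧ j = 1) ∨ (i = 1 ∧ j = 2) ∨ (j = 0 ∧ i = 1) ∨ (j = 1 ∧ i = 2) := by
  constructor
  · rintro ⟨hne, h | h⟩
    · exact h.elim (fun h => Or.inl h) (fun h => Or.inr (Or.inl h))
    · exact h.elim (fun h => Or.inr (Or.inr (Or.inl h))) (fun h => Or.inr (Or.inr (Or.inr h)))
  · intro h
    refine ⟨?_, ?_⟩
    · rcases h with ⟨h1, h2⟩ | ⟨h1, h2⟩ | ⟨h1, h2⟩ | ⟨h1, h2⟩ <;> subst h1 <;> subst h2 <;> simp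
    · rcases h with h | h | h | h
      exacts [Or.inl (Or.inl h), Or.inl (Or.inr h), Or.inr (Or.inl h), Or.inr (Or.inr h)]

end Adj

section Fin3
-- decide lemmas
lemma fin3_eq2 {i : Fin 3} (h0 : i ≠ 0) (h1 : i ≠ 1) : i = 2 := by omega
lemma fin3_eq1 {i : Fin 3} (h0 : i ≠ 0) (h2 : i ≠ 2) : i = 1 := by omega
lemma fin3_eq0 {i : Fin 3} (h1 : i ≠ 1) (h2 : i ≠ 2) : i = 0 := by omega
lemma fin3_mem02 {i : Fin 3} (h1 : i ≠ 1) : i ∈ ({0, 2} : Finset (Fin 3)) := by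
  fin_cases i <;> simp_all
lemma fin3_card_le_one (t : Finset (Fin 3)) (h01 : ¬(0 ∈ t ∧ 1 ∈ t))
    (h12 : ¬(1 ∈ t ∧ 2 ∈ t)) (h02 : ¬(0 ∈ t ∧ 2 ∈ t)) : t.card ≤ 1 := by
  revert h01 h12 h02; revert t; decide
lemma fin3_card_le_two (t : Finset (Fin 3)) (h01 : ¬(0 ∈ t ∧ 1 ∈ t))
    (h12 : ¬(1 ∈ t ∧ 2 ∈ t)) : t.card ≤ 2 := by
  revert h01 h12; revert t; decide
end Fin3

section Lift
variable {V : Type*} {H : SimpleGraph V} {v : V}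

lemma disjSum_disjoint {s₁ s₂ : Finset V} {t₁ t₂ : Finset (Fin 3)}
    (hs : Disjoint s₁ s₂) (ht : Disjoint t₁ t₂) :
    Disjoint (s₁.disjSum t₁) (s₂.disjSum t₂) := by
  rw [Finset.disjoint_left]
  rintro (x | i) hx hx'
  · rw [Finset.inl_mem_disjSum] at hx hx'
    exact Finset.disjoint_left.1 hs hx hx'
  · rw [Finset.inr_mem_disjSum] at hx hx'
    exact Finset.disjoint_left.1 ht hx hx'

lemma toLeft_disjoint {s₁ s₂ : Finset (V ⊕ Fin 3)} (h : Disjoint s₁ s₂) :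
    Disjoint s₁.toLeft s₂.toLeft := by
  rw [Finset.disjoint_left] at h ⊢
  intro x hx hx'
  exact h (Finset.mem_toLeft.1 hx) (Finset.mem_toLeft.1 hx')

lemma indep_toLeft {s : Finset (V ⊕ Fin 3)} (hs : IsIndep (Tr H v) s) :
    IsIndep H s.toLeft := fun x hx y hy h =>
  hs _ (Finset.mem_toLeft.1 hx) _ (Finset.mem_toLeft.1 hy) (tr_adj_inl_inl.2 h)

lemma indep_disjSum {M : Finset V} {t : Finset (Fin 3)} (hM : IsIndep H M)
    (h0 : 0 ∈ t → v ∉ M) (h2 : 2 ∈ t → ∀ x ∈ M, ¬ H.Adj x v)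
    (h01 : ¬(0 ∈ t ∧ 1 ∈ t)) (h12 : ¬(1 ∈ t ∧ 2 ∈ t)) :
    IsIndep (Tr H v) (M.disjSum t) := by
  rintro (x | i) hx (y | j) hy hadj
  · rw [Finset.inl_mem_disjSum] at hx hy
    exact hM x hx y hy (tr_adj_inl_inl.1 hadj)
  · rw [Finset.inl_mem_disjSum] at hx
    rw [Finset.inr_mem_disjSum] at hy
    rcases tr_adj_inl_inr.1 hadj with ⟨hj, hxv⟩ | ⟨hj, hxv⟩
    · exact h0 (hj ▸ hy) (hxv ▸ hx)
    · exact h2 (hj ▸ hy) x hx hxv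
  · rw [Finset.inr_mem_disjSum] at hx
    rw [Finset.inl_mem_disjSum] at hy
    rcases tr_adj_inl_inr.1 hadj.symm with ⟨hi, hyv⟩ | ⟨hi, hyv⟩
    · exact h0 (hi ▸ hx) (hyv ▸ hy)
    · exact h2 (hi ▸ hx) y hy hyv
  · rw [Finset.inr_mem_disjSum] at hx hy
    rcases tr_adj_inr_inr.1 hadj with ⟨hi, hj⟩ | ⟨hi, hj⟩ | ⟨hj, hi⟩ | ⟨hj, hi⟩
    · exact h01 ⟨hi ▸ hx, hj ▸ hy⟩
    · exact h12 ⟨hi ▸ hx, hj ▸ hy⟩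
    · exact h01 ⟨hj ▸ hy, hi ▸ hx⟩
    · exact h12 ⟨hj ▸ hy, hi ▸ hx⟩

-- membership facts from independence in Tr
lemma not_v_toLeft {s : Finset (V ⊕ Fin 3)} (hs : IsIndep (Tr H v) s)
    (h0 : inr 0 ∈ s) : v ∉ s.toLeft := fun hvs =>
  hs _ (Finset.mem_toLeft.1 hvs) _ h0 (tr_adj_inl_inr.2 (Or.inl ⟨rfl, rfl⟩))

lemma not_adj_toLeft {s : Finset (V ⊕ Fin 3)} (hs : IsIndep (Tr H v) s)
    (h2 : inr 2 ∈ s) : ∀ x ∈ s.toLeft, ¬ H.Adj x v := fun x hx h =>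
  hs _ (Finset.mem_toLeft.1 hx) _ h2 (tr_adj_inl_inr.2 (Or.inr ⟨rfl, h⟩))

lemma not_01 {s : Finset (V ⊕ Fin 3)} (hs : IsIndep (Tr H v) s)
    (h0 : inr 0 ∈ s) : inr 1 ∉ s := fun h1 =>
  hs _ h0 _ h1 (tr_adj_inr_inr.2 (Or.inl ⟨rfl, rfl⟩))

lemma not_12 {s : Finset (V ⊕ Fin 3)} (hs : IsIndep (Tr H v) s)
    (h1 : inr 1 ∈ s) : inr 2 ∉ s := fun h2 =>
  hs _ h1 _ h2 (tr_adj_inr_inr.2 (Or.inr (Or.inl ⟨rfl, rfl⟩)))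

end Lift

section Alpha
variable {V : Type*} [Fintype V] {H : SimpleGraph V} {v : V}

lemma indepNum_Tr : indepNum (Tr H v) = indepNum H + 1 := by
  apply le_antisymm
  · have hne : ({n | ∃ s : Finset (V ⊕ Fin 3), IsIndep (Tr H v) s ∧ s.card = n}).Nonempty :=
      ⟨0, ∅, fun x hx => absurd hx (Finset.notMem_empty x), rfl⟩
    apply csSup_le hne
    rintro n ⟨s, hs, rfl⟩
    have hsplit : s.toLeft.card + s.toRight.card = s.card :=
      Finset.card_toLeft_add_card_toRight
    have hL : IsIndep H s.toLeft := indep_toLeft hs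
    by_cases h02 : inr 0 ∈ s ∧ inr 2 ∈ s
    · -- toLeft ∪ {v} independent
      have hv0 : v ∉ s.toLeft := not_v_toLeft hs h02.1
      have hvN : ∀ x ∈ s.toLeft, ¬ H.Adj x v := not_adj_toLeft hs h02.2
      have hins : IsIndep H (insert v s.toLeft) := by
        intro x hx y hy hadj
        rcases Finset.mem_insert.1 hx with hxv | hx <;>
          rcases Finset.mem_insert.1 hy with hyv | hy
        · exact hadj.ne (hxv.trans hyv.symm)
        · exact hvN y hy (hxv ▸ hadj).symm
        · exact hvN x hx (hyv ▸ hadj)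
        · exact hL x hx y hy hadj
      have hc1 : s.toLeft.card + 1 ≤ indepNum H := by
        have := indep_card_le hins
        rwa [Finset.card_insert_of_notMem hv0] at this
      have hc2 : s.toRight.card ≤ 2 := by
        apply fin3_card_le_two
        · rintro ⟨ha, hb⟩
          exact not_01 hs (Finset.mem_toRight.1 ha) (Finset.mem_toRight.1 hb)
        · rintro ⟨ha, hb⟩
          exact not_12 hs (Finset.mem_toRight.1 ha) (Finset.mem_toRight.1 hb)
      omega
    · have hc1 : s.toLeft.card ≤ indepNum H := indep_card_le hL
      have hc2 : s.toRight.card ≤ 1 := by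
        apply fin3_card_le_one
        · rintro ⟨ha, hb⟩
          exact not_01 hs (Finset.mem_toRight.1 ha) (Finset.mem_toRight.1 hb)
        · rintro ⟨ha, hb⟩
          exact not_12 hs (Finset.mem_toRight.1 ha) (Finset.mem_toRight.1 hb)
        · rintro ⟨ha, hb⟩
          exact h02 ⟨Finset.mem_toRight.1 ha, Finset.mem_toRight.1 hb⟩
      omega
  · obtain ⟨M, hM, hMc⟩ := exists_max_indep H
    have hind : IsIndep (Tr H v) (M.disjSum {1}) := by
      apply indep_disjSum hM <;> simp
    have : M.card + 1 ∈ {n | ∃ s : Finset (V ⊕ Fin 3), IsIndep (Tr H v) s ∧ s.card = n} :=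
      ⟨M.disjSum {1}, hind, by rw [Finset.card_disjSum]; simp⟩
    rw [← hMc]
    exact le_csSup ⟨Fintype.card (V ⊕ Fin 3), fun n ⟨t, _, ht⟩ =>
      ht ▸ (t.card_le_univ.trans_eq Finset.card_univ)⟩ this

end Alpha

section Helpers
variable {V : Type*} [Fintype V] {H : SimpleGraph V} {v : V}

lemma subset_toLeft_of_disjSum {A : Finset V} {t : Finset (Fin 3)} {s : Finset (V ⊕ Fin 3)}
    (h : A.disjSum t ⊆ s) : A ⊆ s.toLeft := fun x hx =>
  Finset.mem_toLeft.2 (h (Finset.inl_mem_disjSum.2 hx))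

lemma toRight_card_le_one_of_one {s : Finset (V ⊕ Fin 3)} (hs : IsIndep (Tr H v) s)
    (h1 : inr 1 ∈ s) : s.toRight.card ≤ 1 := by
  apply fin3_card_le_one
  · rintro ⟨ha, hb⟩
    exact not_01 hs (Finset.mem_toRight.1 ha) (Finset.mem_toRight.1 hb)
  · rintro ⟨ha, hb⟩
    exact not_12 hs (Finset.mem_toRight.1 ha) (Finset.mem_toRight.1 hb)
  · rintro ⟨ha, _⟩
    exact not_01 hs (Finset.mem_toRight.1 ha) h1

lemma toLeft_card_max {s : Finset (V ⊕ Fin 3)} (hs : IsIndep (Tr H v) s)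
    (hc : s.card = indepNum H + 1) (ht : s.toRight.card ≤ 1) :
    s.toLeft.card = indepNum H := by
  have h1 := indep_card_le (indep_toLeft hs)
  have h2 : s.toLeft.card + s.toRight.card = s.card := Finset.card_toLeft_add_card_toRight
  omega

lemma indep_insert_v {M : Finset V} (hM : IsIndep H M) (hvN : ∀ x ∈ M, ¬ H.Adj x v) :
    IsIndep H (insert v M) := by
  intro x hx y hy hadj
  rcases Finset.mem_insert.1 hx with hxv | hx <;> rcases Finset.mem_insert.1 hy with hyv | hy
  · exact hadj.ne (hxv.trans hyv.symm)
  · exact hvN y hy (hxv ▸ hadj).symm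
  · exact hvN x hx (hyv ▸ hadj)
  · exact hM x hx y hy hadj

end Helpers

section Forward
variable {V : Type*} [Fintype V] {H : SimpleGraph V} {v : V}

lemma forward_ext (hT : IsW2 (Tr H v)) {A B : Finset V} (hA : IsIndep H A)
    (hB : IsIndep H B) (hd : Disjoint A B) :
    ∃ A' B' : Finset V, IsIndep H A' ∧ IsIndep H B' ∧ Disjoint A' B' ∧
      A ⊆ A' ∧ B ⊆ B' ∧ A'.card = indepNum H ∧ B'.card = indepNum H := by
  have hlA : IsIndep (Tr H v) (A.disjSum {1}) :=
    indep_disjSum hA (fun h => absurd h (by decide)) (fun h => absurd h (by decide))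
      (by decide) (by decide)
  by_cases hvB : v ∈ B
  · -- lift B with {2}
    have hlB : IsIndep (Tr H v) (B.disjSum {2}) :=
      indep_disjSum hB (fun h => absurd h (by decide))
        (fun _ x hx hadj => hB x hx v hvB hadj) (by decide) (by decide)
    obtain ⟨A'', B'', hA'', hB'', hd'', hsubA, hsubB, hcA, hcB⟩ :=
      hT.2 _ _ hlA hlB (disjSum_disjoint hd (by decide))
    rw [indepNum_Tr] at hcA hcB
    have h1A : inr 1 ∈ A'' := hsubA (Finset.inr_mem_disjSum.2 (by decide))
    have hvB'' : inl v ∈ B'' := hsubB (Finset.inl_mem_disjSum.2 hvB)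
    have h0B : inr 0 ∉ B'' := fun h => not_v_toLeft hB'' h (Finset.mem_toLeft.2 hvB'')
    have h1B : inr 1 ∉ B'' := Finset.disjoint_left.1 hd'' h1A
    have hcB1 : B''.toRight.card ≤ 1 := by
      apply fin3_card_le_one
      · rintro ⟨ha, _⟩; exact h0B (Finset.mem_toRight.1 ha)
      · rintro ⟨ha, _⟩; exact h1B (Finset.mem_toRight.1 ha)
      · rintro ⟨ha, _⟩; exact h0B (Finset.mem_toRight.1 ha)
    exact ⟨A''.toLeft, B''.toLeft, indep_toLeft hA'', indep_toLeft hB'',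
      toLeft_disjoint hd'', subset_toLeft_of_disjSum hsubA, subset_toLeft_of_disjSum hsubB,
      toLeft_card_max hA'' hcA (toRight_card_le_one_of_one hA'' h1A),
      toLeft_card_max hB'' hcB hcB1⟩
  · -- lift B with {0}
    have hlB : IsIndep (Tr H v) (B.disjSum {0}) :=
      indep_disjSum hB (fun _ => hvB) (fun h => absurd h (by decide)) (by decide) (by decide)
    obtain ⟨A'', B'', hA'', hB'', hd'', hsubA, hsubB, hcA, hcB⟩ :=
      hT.2 _ _ hlA hlB (disjSum_disjoint hd (by decide))
    rw [indepNum_Tr] at hcA hcB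
    have h1A : inr 1 ∈ A'' := hsubA (Finset.inr_mem_disjSum.2 (by decide))
    have h1B : inr 1 ∉ B'' := Finset.disjoint_left.1 hd'' h1A
    have hA1card : A''.toLeft.card = indepNum H :=
      toLeft_card_max hA'' hcA (toRight_card_le_one_of_one hA'' h1A)
    have hsubA' : A ⊆ A''.toLeft := subset_toLeft_of_disjSum hsubA
    have hsubB' : B ⊆ B''.toLeft := subset_toLeft_of_disjSum hsubB
    by_cases h2B : inr 2 ∈ B''
    · -- B'' has extras {0, 2}
      have h0B : inr 0 ∈ B'' := hsubB (Finset.inr_mem_disjSum.2 (by decide))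
      have hvnB : v ∉ B''.toLeft := not_v_toLeft hB'' h0B
      have hNB : ∀ x ∈ B''.toLeft, ¬ H.Adj x v := not_adj_toLeft hB'' h2B
      have htr2 : B''.toRight.card = 2 := by
        have hle : B''.toRight.card ≤ 2 := by
          apply fin3_card_le_two
          · rintro ⟨_, hb⟩; exact h1B (Finset.mem_toRight.1 hb)
          · rintro ⟨ha, _⟩; exact h1B (Finset.mem_toRight.1 ha)
        have hge : ({0, 2} : Finset (Fin 3)) ⊆ B''.toRight := by
          intro j hj
          rcases Finset.mem_insert.1 hj with rfl | hj
          · exact Finset.mem_toRight.2 h0B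
          · rw [Finset.mem_singleton] at hj
            subst hj
            exact Finset.mem_toRight.2 h2B
        have := Finset.card_le_card hge
        have hc2 : ({0, 2} : Finset (Fin 3)).card = 2 := by decide
        omega
      have hBLcard : B''.toLeft.card + 1 = indepNum H := by
        have h2 : B''.toLeft.card + B''.toRight.card = B''.card :=
          Finset.card_toLeft_add_card_toRight
        omega
      by_cases hvA1 : v ∈ A''.toLeft
      · -- second application of W2
        have hS : IsIndep H B''.toLeft := indep_toLeft hB''
        have hT' : IsIndep H A''.toLeft := indep_toLeft hA''
        have hST : Disjoint B''.toLeft A''.toLeft := toLeft_disjoint hd''.symm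
        have hlS : IsIndep (Tr H v) (B''.toLeft.disjSum {1}) :=
          indep_disjSum hS (fun h => absurd h (by decide)) (fun h => absurd h (by decide))
            (by decide) (by decide)
        have hlT : IsIndep (Tr H v) (A''.toLeft.disjSum {2}) :=
          indep_disjSum hT' (fun h => absurd h (by decide))
            (fun _ x hx hadj => hT' x hx v hvA1 hadj) (by decide) (by decide)
        obtain ⟨B₃, A₃, hB₃, hA₃, hd₃, hsubS, hsubT, hcB₃, hcA₃⟩ :=
          hT.2 _ _ hlS hlT (disjSum_disjoint hST (by decide))
        rw [indepNum_Tr] at hcB₃ hcA₃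
        have h1B₃ : inr 1 ∈ B₃ := hsubS (Finset.inr_mem_disjSum.2 (by decide))
        have h1A₃ : inr 1 ∉ A₃ := Finset.disjoint_left.1 hd₃ h1B₃
        have hvA₃ : inl v ∈ A₃ := hsubT (Finset.inl_mem_disjSum.2 hvA1)
        have h0A₃ : inr 0 ∉ A₃ := fun h => not_v_toLeft hA₃ h (Finset.mem_toLeft.2 hvA₃)
        have hcA₃1 : A₃.toRight.card ≤ 1 := by
          apply fin3_card_le_one
          · rintro ⟨ha, _⟩; exact h0A₃ (Finset.mem_toRight.1 ha)
          · rintro ⟨ha, _⟩; exact h1A₃ (Finset.mem_toRight.1 ha)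
          · rintro ⟨ha, _⟩; exact h0A₃ (Finset.mem_toRight.1 ha)
        exact ⟨A₃.toLeft, B₃.toLeft, indep_toLeft hA₃, indep_toLeft hB₃,
          toLeft_disjoint hd₃.symm,
          hsubA'.trans (subset_toLeft_of_disjSum hsubT),
          hsubB'.trans (subset_toLeft_of_disjSum hsubS),
          toLeft_card_max hA₃ hcA₃ hcA₃1,
          toLeft_card_max hB₃ hcB₃ (toRight_card_le_one_of_one hB₃ h1B₃)⟩
      · -- B' = insert v B''.toLeft
        refine ⟨A''.toLeft, insert v B''.toLeft, indep_toLeft hA'',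
          indep_insert_v (indep_toLeft hB'') hNB, ?_, hsubA',
          hsubB'.trans (Finset.subset_insert _ _), hA1card, ?_⟩
        · rw [Finset.disjoint_left]
          intro x hx hx'
          rcases Finset.mem_insert.1 hx' with rfl | hx'
          · exact hvA1 hx
          · exact Finset.disjoint_left.1 (toLeft_disjoint hd'') hx hx'
        · rw [Finset.card_insert_of_notMem hvnB]
          omega
    · -- B'' has a single extra
      have hcB1 : B''.toRight.card ≤ 1 := by
        apply fin3_card_le_one
        · rintro ⟨_, hb⟩; exact h1B (Finset.mem_toRight.1 hb)
        · rintro ⟨ha, _⟩; exact h1B (Finset.mem_toRight.1 ha)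
        · rintro ⟨_, hb⟩; exact h2B (Finset.mem_toRight.1 hb)
      exact ⟨A''.toLeft, B''.toLeft, indep_toLeft hA'', indep_toLeft hB'',
        toLeft_disjoint hd'', hsubA', hsubB', hA1card, toLeft_card_max hB'' hcB hcB1⟩

end Forward

section Backward
variable {V : Type*} [Fintype V] {H : SimpleGraph V} {v : V}

lemma indep_subset {W : Type*} {G : SimpleGraph W} {s t : Finset W} (hsub : s ⊆ t)
    (ht : IsIndep G t) : IsIndep G s := fun x hx y hy => ht x (hsub hx) y (hsub hy)

lemma subset_disjSum {A : Finset (V ⊕ Fin 3)} {M : Finset V} {t : Finset (Fin 3)}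
    (hL : A.toLeft ⊆ M) (hR : A.toRight ⊆ t) : A ⊆ M.disjSum t := by
  rintro (x | i) hx
  · exact Finset.inl_mem_disjSum.2 (hL (Finset.mem_toLeft.2 hx))
  · exact Finset.inr_mem_disjSum.2 (hR (Finset.mem_toRight.2 hx))

lemma toRight_sub0 {A : Finset (V ⊕ Fin 3)} (h1 : inr 1 ∉ A) (h2 : inr 2 ∉ A) :
    A.toRight ⊆ {0} := by
  intro j hj
  rw [Finset.mem_toRight] at hj
  rw [Finset.mem_singleton]
  refine fin3_eq0 ?_ ?_ <;> rintro rfl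
  exacts [h1 hj, h2 hj]

lemma toRight_sub1 {A : Finset (V ⊕ Fin 3)} (h0 : inr 0 ∉ A) (h2 : inr 2 ∉ A) :
    A.toRight ⊆ {1} := by
  intro j hj
  rw [Finset.mem_toRight] at hj
  rw [Finset.mem_singleton]
  refine fin3_eq1 ?_ ?_ <;> rintro rfl
  exacts [h0 hj, h2 hj]

lemma toRight_sub2 {A : Finset (V ⊕ Fin 3)} (h0 : inr 0 ∉ A) (h1 : inr 1 ∉ A) :
    A.toRight ⊆ {2} := by
  intro j hj
  rw [Finset.mem_toRight] at hj
  rw [Finset.mem_singleton]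
  refine fin3_eq2 ?_ ?_ <;> rintro rfl
  exacts [h0 hj, h1 hj]

lemma toRight_sub02 {A : Finset (V ⊕ Fin 3)} (h1 : inr 1 ∉ A) :
    A.toRight ⊆ {0, 2} := by
  intro j hj
  rw [Finset.mem_toRight] at hj
  exact fin3_mem02 (fun e => h1 (e ▸ hj))

/-- Case `c ∈ A`. -/
lemma back_c (hH : IsW2 H) {A B : Finset (V ⊕ Fin 3)} (hA : IsIndep (Tr H v) A)
    (hB : IsIndep (Tr H v) B) (hd : Disjoint A B) (h2A : inr 2 ∈ A) :
    ∃ A' B' : Finset (V ⊕ Fin 3), IsIndep (Tr H v) A' ∧ IsIndep (Tr H v) B' ∧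
      Disjoint A' B' ∧ A ⊆ A' ∧ B ⊆ B' ∧
      A'.card = indepNum (Tr H v) ∧ B'.card = indepNum (Tr H v) := by
  have hA1 : inr 1 ∉ A := fun h => not_12 hA h h2A
  have hAN : ∀ x ∈ A.toLeft, ¬ H.Adj x v := not_adj_toLeft hA h2A
  have h2B : inr 2 ∉ B := Finset.disjoint_left.1 hd h2A
  by_cases hvA : v ∈ A.toLeft
  · -- Case I : v ∈ A₀
    have hA0 : inr 0 ∉ A := fun h => not_v_toLeft hA h hvA
    obtain ⟨MA, MB, hMA, hMB, hdM, hsA, hsB, hcA, hcB⟩ :=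
      hH.2 _ _ (indep_toLeft hA) (indep_toLeft hB) (toLeft_disjoint hd)
    have hvMA : v ∈ MA := hsA hvA
    have hvnMB : v ∉ MB := Finset.disjoint_left.1 hdM hvMA
    by_cases hB0 : inr 0 ∈ B
    · have hB1 : inr 1 ∉ B := not_01 hB hB0
      refine ⟨MA.disjSum {2}, MB.disjSum {0},
        indep_disjSum hMA (fun h => absurd h (by decide))
          (fun _ x hx hadj => hMA x hx v hvMA hadj) (by decide) (by decide),
        indep_disjSum hMB (fun _ => hvnMB) (fun h => absurd h (by decide))
          (by decide) (by decide),
        disjSum_disjoint hdM (by decide),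
        subset_disjSum hsA (toRight_sub2 hA0 hA1),
        subset_disjSum hsB (toRight_sub0 hB1 h2B),
        by simp [indepNum_Tr, Finset.card_disjSum, hcA],
        by simp [indepNum_Tr, Finset.card_disjSum, hcB]⟩
    · refine ⟨MA.disjSum {2}, MB.disjSum {1},
        indep_disjSum hMA (fun h => absurd h (by decide))
          (fun _ x hx hadj => hMA x hx v hvMA hadj) (by decide) (by decide),
        indep_disjSum hMB (fun h => absurd h (by decide)) (fun h => absurd h (by decide))
          (by decide) (by decide),
        disjSum_disjoint hdM (by decide),
        subset_disjSum hsA (toRight_sub2 hA0 hA1),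
        subset_disjSum hsB (toRight_sub1 hB0 h2B),
        by simp [indepNum_Tr, Finset.card_disjSum, hcA],
        by simp [indepNum_Tr, Finset.card_disjSum, hcB]⟩
  · -- Case II : v ∉ A₀
    have hins : IsIndep H (insert v A.toLeft) := indep_insert_v (indep_toLeft hA) hAN
    by_cases hB0 : inr 0 ∈ B
    · -- II.a
      have hB1 : inr 1 ∉ B := not_01 hB hB0
      have hvnB : v ∉ B.toLeft := not_v_toLeft hB hB0
      have hdins : Disjoint (insert v A.toLeft) B.toLeft := by
        rw [Finset.disjoint_left]
        intro x hx hx'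
        rcases Finset.mem_insert.1 hx with rfl | hx
        · exact hvnB hx'
        · exact Finset.disjoint_left.1 (toLeft_disjoint hd) hx hx'
      obtain ⟨MA, MB, hMA, hMB, hdM, hsA, hsB, hcA, hcB⟩ :=
        hH.2 _ _ hins (indep_toLeft hB) hdins
      have hvMA : v ∈ MA := hsA (Finset.mem_insert_self _ _)
      have hvnMB : v ∉ MB := Finset.disjoint_left.1 hdM hvMA
      have hA0 : inr 0 ∉ A := Finset.disjoint_right.1 hd hB0
      refine ⟨MA.disjSum {2}, MB.disjSum {0},
        indep_disjSum hMA (fun h => absurd h (by decide))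
          (fun _ x hx hadj => hMA x hx v hvMA hadj) (by decide) (by decide),
        indep_disjSum hMB (fun _ => hvnMB) (fun h => absurd h (by decide))
          (by decide) (by decide),
        disjSum_disjoint hdM (by decide),
        subset_disjSum (fun x hx => hsA (Finset.mem_insert_of_mem hx)) (toRight_sub2 hA0 hA1),
        subset_disjSum hsB (toRight_sub0 hB1 h2B),
        by simp [indepNum_Tr, Finset.card_disjSum, hcA],
        by simp [indepNum_Tr, Finset.card_disjSum, hcB]⟩
    · -- II.b : double application of W₂
      have hdins : Disjoint (insert v A.toLeft) (B.toLeft.erase v) := by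
        rw [Finset.disjoint_left]
        intro x hx hx'
        rcases Finset.mem_insert.1 hx with rfl | hx
        · exact Finset.notMem_erase _ _ hx'
        · exact Finset.disjoint_left.1 (toLeft_disjoint hd) hx
            (Finset.erase_subset _ _ hx')
      obtain ⟨M₁, M₂, hM₁, hM₂, hdM, hs₁, hs₂, hc₁, hc₂⟩ :=
        hH.2 _ _ hins (indep_subset (Finset.erase_subset _ _) (indep_toLeft hB)) hdins
      have hvM₁ : v ∈ M₁ := hs₁ (Finset.mem_insert_self _ _)
      have hS₀ : IsIndep H (M₁.erase v) := indep_subset (Finset.erase_subset _ _) hM₁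
      have hS₀N : ∀ x ∈ M₁.erase v, ¬ H.Adj x v := fun x hx =>
        hM₁ x (Finset.erase_subset _ _ hx) v hvM₁
      have hvnS₀ : v ∉ M₁.erase v := Finset.notMem_erase _ _
      have hdBS : Disjoint B.toLeft (M₁.erase v) := by
        rw [Finset.disjoint_left]
        intro x hxB hxS
        by_cases hxv : x = v
        · exact hvnS₀ (hxv ▸ hxS)
        · exact Finset.disjoint_left.1 hdM (Finset.erase_subset _ _ hxS)
            (hs₂ (Finset.mem_erase.2 ⟨hxv, hxB⟩))
      obtain ⟨T, S₁, hT, hS₁, hdTS, hsT, hsS₁, hcT, hcS₁⟩ :=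
        hH.2 _ _ (indep_toLeft hB) hS₀ hdBS
      have hcS₀ : (M₁.erase v).card + 1 = indepNum H := by
        rw [Finset.card_erase_add_one hvM₁, hc₁]
      refine ⟨(M₁.erase v).disjSum {0, 2}, T.disjSum {1},
        indep_disjSum hS₀ (fun _ => hvnS₀) (fun _ => hS₀N) (by decide) (by decide),
        indep_disjSum hT (fun h => absurd h (by decide)) (fun h => absurd h (by decide))
          (by decide) (by decide),
        disjSum_disjoint ((hdTS.symm).mono_left hsS₁) (by decide),
        subset_disjSum ?_ (toRight_sub02 hA1),
        subset_disjSum hsT (toRight_sub1 hB0 h2B),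
        ?_, by simp [indepNum_Tr, Finset.card_disjSum, hcT]⟩
      · intro x hx
        exact Finset.mem_erase.2 ⟨fun e => hvA (e ▸ hx), hs₁ (Finset.mem_insert_of_mem hx)⟩
      · rw [indepNum_Tr, Finset.card_disjSum]
        have : ({0, 2} : Finset (Fin 3)).card = 2 := by decide
        omega

/-- Case `a ∈ A`, no `c` anywhere. -/
lemma back_a (hH : IsW2 H) {A B : Finset (V ⊕ Fin 3)} (hA : IsIndep (Tr H v) A)
    (hB : IsIndep (Tr H v) B) (hd : Disjoint A B) (h0A : inr 0 ∈ A)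
    (h2A : inr 2 ∉ A) (h2B : inr 2 ∉ B) :
    ∃ A' B' : Finset (V ⊕ Fin 3), IsIndep (Tr H v) A' ∧ IsIndep (Tr H v) B' ∧
      Disjoint A' B' ∧ A ⊆ A' ∧ B ⊆ B' ∧
      A'.card = indepNum (Tr H v) ∧ B'.card = indepNum (Tr H v) := by
  have hA1 : inr 1 ∉ A := not_01 hA h0A
  have hvnA : v ∉ A.toLeft := not_v_toLeft hA h0A
  have h0B : inr 0 ∉ B := Finset.disjoint_left.1 hd h0A
  obtain ⟨MA, MB, hMA, hMB, hdM, hsA, hsB, hcA, hcB⟩ :=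
    hH.2 _ _ (indep_toLeft hA) (indep_toLeft hB) (toLeft_disjoint hd)
  by_cases hvMA : v ∈ MA
  · have hcS₀ : (MA.erase v).card + 1 = indepNum H := by
      rw [Finset.card_erase_add_one hvMA, hcA]
    refine ⟨(MA.erase v).disjSum {0, 2}, MB.disjSum {1},
      indep_disjSum (indep_subset (Finset.erase_subset _ _) hMA)
        (fun _ => Finset.notMem_erase _ _)
        (fun _ x hx => hMA x (Finset.erase_subset _ _ hx) v hvMA) (by decide) (by decide),
      indep_disjSum hMB (fun h => absurd h (by decide)) (fun h => absurd h (by decide))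
        (by decide) (by decide),
      disjSum_disjoint (hdM.mono_left (Finset.erase_subset _ _)) (by decide),
      subset_disjSum (fun x hx => Finset.mem_erase.2 ⟨fun e => hvnA (e ▸ hx), hsA hx⟩)
        (toRight_sub02 hA1),
      subset_disjSum hsB (toRight_sub1 h0B h2B),
      ?_, by simp [indepNum_Tr, Finset.card_disjSum, hcB]⟩
    rw [indepNum_Tr, Finset.card_disjSum]
    have : ({0, 2} : Finset (Fin 3)).card = 2 := by decide
    omega
  · refine ⟨MA.disjSum {0}, MB.disjSum {1},
      indep_disjSum hMA (fun _ => hvMA) (fun h => absurd h (by decide))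
        (by decide) (by decide),
      indep_disjSum hMB (fun h => absurd h (by decide)) (fun h => absurd h (by decide))
        (by decide) (by decide),
      disjSum_disjoint hdM (by decide),
      subset_disjSum hsA (toRight_sub0 hA1 h2A),
      subset_disjSum hsB (toRight_sub1 h0B h2B),
      by simp [indepNum_Tr, Finset.card_disjSum, hcA],
      by simp [indepNum_Tr, Finset.card_disjSum, hcB]⟩

/-- Case with no `a`, `c` anywhere and `b ∉ B`. -/
lemma back_none (hH : IsW2 H) {A B : Finset (V ⊕ Fin 3)} (hA : IsIndep (Tr H v) A)
    (hB : IsIndep (Tr H v) B) (hd : Disjoint A B) (h0A : inr 0 ∉ A) (h2A : inr 2 ∉ A)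
    (h0B : inr 0 ∉ B) (h2B : inr 2 ∉ B) (h1B : inr 1 ∉ B) :
    ∃ A' B' : Finset (V ⊕ Fin 3), IsIndep (Tr H v) A' ∧ IsIndep (Tr H v) B' ∧
      Disjoint A' B' ∧ A ⊆ A' ∧ B ⊆ B' ∧
      A'.card = indepNum (Tr H v) ∧ B'.card = indepNum (Tr H v) := by
  obtain ⟨MA, MB, hMA, hMB, hdM, hsA, hsB, hcA, hcB⟩ :=
    hH.2 _ _ (indep_toLeft hA) (indep_toLeft hB) (toLeft_disjoint hd)
  by_cases hvMB : v ∈ MB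
  · refine ⟨MA.disjSum {1}, MB.disjSum {2},
      indep_disjSum hMA (fun h => absurd h (by decide)) (fun h => absurd h (by decide))
        (by decide) (by decide),
      indep_disjSum hMB (fun h => absurd h (by decide))
        (fun _ x hx hadj => hMB x hx v hvMB hadj) (by decide) (by decide),
      disjSum_disjoint hdM (by decide),
      subset_disjSum hsA (toRight_sub1 h0A h2A),
      subset_disjSum hsB (toRight_sub2 h0B h1B),
      by simp [indepNum_Tr, Finset.card_disjSum, hcA],
      by simp [indepNum_Tr, Finset.card_disjSum, hcB]⟩
  · refine ⟨MA.disjSum {1}, MB.disjSum {0},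
      indep_disjSum hMA (fun h => absurd h (by decide)) (fun h => absurd h (by decide))
        (by decide) (by decide),
      indep_disjSum hMB (fun _ => hvMB) (fun h => absurd h (by decide))
        (by decide) (by decide),
      disjSum_disjoint hdM (by decide),
      subset_disjSum hsA (toRight_sub1 h0A h2A),
      subset_disjSum hsB (toRight_sub0 h1B h2B),
      by simp [indepNum_Tr, Finset.card_disjSum, hcA],
      by simp [indepNum_Tr, Finset.card_disjSum, hcB]⟩

lemma backward_ext (hH : IsW2 H) {A B : Finset (V ⊕ Fin 3)} (hA : IsIndep (Tr H v) A)
    (hB : IsIndep (Tr H v) B) (hd : Disjoint A B) :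
    ∃ A' B' : Finset (V ⊕ Fin 3), IsIndep (Tr H v) A' ∧ IsIndep (Tr H v) B' ∧
      Disjoint A' B' ∧ A ⊆ A' ∧ B ⊆ B' ∧
      A'.card = indepNum (Tr H v) ∧ B'.card = indepNum (Tr H v) := by
  by_cases h2A : inr 2 ∈ A
  · exact back_c hH hA hB hd h2A
  by_cases h2B : inr 2 ∈ B
  · obtain ⟨A', B', h1, h2, h3, h4, h5, h6, h7⟩ := back_c hH hB hA hd.symm h2B
    exact ⟨B', A', h2, h1, h3.symm, h5, h4, h7, h6⟩
  by_cases h0A : inr 0 ∈ A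
  · exact back_a hH hA hB hd h0A h2A h2B
  by_cases h0B : inr 0 ∈ B
  · obtain ⟨A', B', h1, h2, h3, h4, h5, h6, h7⟩ := back_a hH hB hA hd.symm h0B h2B h2A
    exact ⟨B', A', h2, h1, h3.symm, h5, h4, h7, h6⟩
  by_cases h1B : inr 1 ∈ B
  · have h1A : inr 1 ∉ A := Finset.disjoint_right.1 hd h1B
    obtain ⟨A', B', h1, h2, h3, h4, h5, h6, h7⟩ :=
      back_none hH hB hA hd.symm h0B h2B h0A h2A h1A
    exact ⟨B', A', h2, h1, h3.symm, h5, h4, h7, h6⟩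
  · exact back_none hH hA hB hd h0A h2A h0B h2B h1B

end Backward

theorem isW2_Tr_iff_aux {V : Type*} [Fintype V] (H : SimpleGraph V) (v : V)
    (hv : ∃ u, H.Adj v u) :
    IsW2 (Tr H v) ↔ IsW2 H := by
  constructor
  · intro hT
    refine ⟨?_, fun A B hA hB hd => forward_ext hT hA hB hd⟩
    obtain ⟨u, hu⟩ := hv
    have h1 : (1 : ℕ) < Fintype.card V := Fintype.one_lt_card_iff.2 ⟨v, u, hu.ne⟩
    omega
  · intro hH
    refine ⟨?_, fun A B hA hB hd => backward_ext hH hA hB hd⟩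
    have : Fintype.card (V ⊕ Fin 3) = Fintype.card V + 3 := by
      simp [Fintype.card_sum]
    omega

theorem isW2_Tr_iff {V : Type*} [Fintype V] (H : SimpleGraph V) (v : V)
    (hv : ∃ u, H.Adj v u) :
    IsW2 (Tr H v) ↔ IsW2 H :=
  isW2_Tr_iff_aux H v hv
end
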